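/- Let G and H be connected weighted graphs on the same vertex set of size n ≥ 2, with Laplacians L_G and L_H satisfying L_H ⪯ L_G. Then, writing σ = st_H(G) = Tr(L_H⁺ L_G), the pseudo-log-determinants satisfy: ld(L_H) + log(σ − n + 2) ≤ ld(L_G) ≤ ld(L_H) + (n−1)·log( σ/(n−1) ). Moreover both inequalities are equalities when H = G. -/

import Mathlib

open Matrix

/-- The four Penrose conditions characterizing the Moore–Penrose pseudoinverse `P` of a real
matrix `A`. -/
def IsMoorePenrose {ι : Type*} [Fintype ι] (A P : Matrix ι ι ℝ) : Prop :=
  A * P * A = A ∧ P * A * P = P ∧ (A * P)ᵀ = A * P ∧ (P * A)ᵀ = P * A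

/-- The Laplacian of a connected weighted graph: symmetric, nonpositive off-diagonal entries,
zero row sums, and kernel spanned by the all-ones vector. -/
def IsConnLaplacian {ι : Type*} [Fintype ι] (M : Matrix ι ι ℝ) : Prop :=
  M.IsSymm ∧ (∀ i j, i ≠ j → M i j ≤ 0) ∧ (∀ i, ∑ j, M i j = 0) ∧
    ∀ x : ι → ℝ, M.mulVec x = 0 ↔ ∃ c : ℝ, x = fun _ => c

/-- Pseudo-log-determinant: the sum of the logarithms of the positive eigenvalues
(roots of the characteristic polynomial, with multiplicity). -/
noncomputable def pld {ι : Type*} [Fintype ι] [DecidableEq ι] (M : Matrix ι ι ℝ) : ℝ :=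
  ((M.charpoly.roots.filter (fun r => 0 < r)).map Real.log).sum

/-!
Write `Π = J / n` for the projection onto the constant vectors. For a connected Laplacian `L`,
the eigenvectors of `L` also diagonalize `L + Π`, with the simple eigenvalue `0` (on the
constants) replaced by `1`; hence `L + Π` is positive definite with `det (L + Π) = exp (ld L)`,
and `(L_H + Π)⁻¹ = L_H⁺ + Π`. Put `A = L_H + Π` and `B = L_G + Π`, so `B - A = L_G - L_H ⪰ 0`
is singular. The relative eigenvalues `μᵢ` of `B` with respect to `A` are then all `≥ 1`, one of
them equals `1`, their sum is `tr (A⁻¹ B) = σ + 1` and their product is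
`det B / det A = exp (ld L_G - ld L_H)`. The lower bound is `∏ μᵢ ≥ 1 + ∑ (μᵢ - 1)`, the upper
bound is AM-GM for the `n - 1` remaining `μᵢ`.
-/

open Finset

lemma Finset.one_add_sum_le_prod_one_add {ι R : Type*} [CommSemiring R] [PartialOrder R]
    [IsOrderedRing R] (s : Finset ι) {f : ι → R} (hf : ∀ i ∈ s, 0 ≤ f i) :
    1 + ∑ i ∈ s, f i ≤ ∏ i ∈ s, (1 + f i) := by
  induction s using Finset.cons_induction with
  | empty => simp
  | cons a s _ ih =>
    rw [prod_cons, sum_cons]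
    have hfa : 0 ≤ f a := hf a (mem_cons_self a s)
    have hs : 0 ≤ ∑ i ∈ s, f i := sum_nonneg fun i hi => hf i (mem_cons_of_mem hi)
    calc 1 + (f a + ∑ i ∈ s, f i) ≤ 1 + (f a + ∑ i ∈ s, f i) + f a * ∑ i ∈ s, f i :=
          le_add_of_nonneg_right (mul_nonneg hfa hs)
      _ = (1 + f a) * (1 + ∑ i ∈ s, f i) := by ring
      _ ≤ (1 + f a) * ∏ i ∈ s, (1 + f i) :=
          mul_le_mul_of_nonneg_left (ih fun i hi => hf i (mem_cons_of_mem hi))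
            (add_nonneg zero_le_one hfa)

namespace Real

lemma sum_log_le_card_mul_log_mean {ι : Type*} (s : Finset ι) {f : ι → ℝ}
    (hf : ∀ i ∈ s, 0 < f i) :
    ∑ i ∈ s, log (f i) ≤ #s * log ((∑ i ∈ s, f i) / #s) := by
  rcases s.eq_empty_or_nonempty with rfl | hs
  · simp
  have hcard : (0 : ℝ) < #s := by exact_mod_cast hs.card_pos
  have hjensen := strictConcaveOn_log_Ioi.concaveOn.le_map_sum (t := s) (w := fun _ => (#s : ℝ)⁻¹)
    (p := f) (fun _ _ => by positivity) (by simp [hcard.ne']) hf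
  rw [← smul_sum, ← smul_sum, smul_eq_mul, smul_eq_mul, inv_mul_eq_div, inv_mul_eq_div] at hjensen
  calc ∑ i ∈ s, log (f i) = #s * ((∑ i ∈ s, log (f i)) / #s) := by field_simp
    _ ≤ _ := mul_le_mul_of_nonneg_left hjensen hcard.le

variable {ι : Type*} [Fintype ι] {μ : ι → ℝ}

lemma log_sum_sub_card_add_one_le_log_prod (hμ : ∀ i, 1 ≤ μ i) :
    log (∑ i, μ i - Fintype.card ι + 1) ≤ log (∏ i, μ i) := by
  have key := one_add_sum_le_prod_one_add univ (f := fun i => μ i - 1)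
    fun i _ => sub_nonneg.mpr (hμ i)
  simp only [add_sub_cancel, sum_sub_distrib, sum_const, card_univ, nsmul_one] at key
  have hcard : (Fintype.card ι : ℝ) ≤ ∑ i, μ i := by
    simpa using sum_le_sum fun i (_ : i ∈ univ) => hμ i
  exact log_le_log (by linarith) (by linarith)

lemma log_prod_le_card_sub_one_mul_log_of_eq_one (hμ : ∀ i, 0 < μ i) {i₀ : ι} (hi₀ : μ i₀ = 1) :
    log (∏ i, μ i) ≤ (Fintype.card ι - 1) * log ((∑ i, μ i - 1) / (Fintype.card ι - 1)) := by
  classical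
  have hcard : ((#(univ.erase i₀) : ℕ) : ℝ) = Fintype.card ι - 1 := by
    rw [card_erase_of_mem (mem_univ i₀), card_univ, Nat.cast_pred (Fintype.card_pos_iff.mpr ⟨i₀⟩)]
  rw [← mul_prod_erase univ μ (mem_univ i₀), ← add_sum_erase univ μ (mem_univ i₀), hi₀,
    one_mul, add_sub_cancel_left, log_prod fun i _ => (hμ i).ne', ← hcard]
  exact sum_log_le_card_mul_log_mean _ fun i _ => hμ i

end Real

namespace Matrix

variable {ι : Type*} [Fintype ι] [DecidableEq ι]

lemma det_eq_prod_of_mulVec_eq_smul {K : Type*} [Field K] {M : Matrix ι ι K}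
    (b : Module.Basis ι K (ι → K)) (ν : ι → K) (h : ∀ i, M *ᵥ b i = ν i • b i) :
    M.det = ∏ i, ν i := by
  rw [← LinearMap.det_toLin', ← LinearMap.det_toMatrix b, ← det_diagonal]
  congr 1
  ext i j
  rw [LinearMap.toMatrix_apply, toLin'_apply, h, map_smul, b.repr_self, diagonal_apply]
  rcases eq_or_ne i j with rfl | hij <;> simp [*]

lemma det_eq_zero_of_sum_row_eq_zero [Nonempty ι] {R : Type*} [CommRing R] [IsDomain R]
    {M : Matrix ι ι R} (h : ∀ i, ∑ j, M i j = 0) : M.det = 0 := by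
  refine exists_mulVec_eq_zero_iff.mp ⟨1, one_ne_zero, ?_⟩
  ext i; simp [mulVec, dotProduct, h i]

namespace IsHermitian

variable {M : Matrix ι ι ℝ} (hM : M.IsHermitian)
include hM

lemma pld_eq : pld M = ∑ i with 0 < hM.eigenvalues i, Real.log (hM.eigenvalues i) := by
  rw [pld, hM.roots_charpoly_eq_eigenvalues, Multiset.filter_map, Multiset.map_map]
  rfl

lemma one_le_eigenvalues (h : (M - 1).PosSemidef) (i : ι) : 1 ≤ hM.eigenvalues i := by
  set v := ⇑(hM.eigenvectorBasis i)
  have hv : v ⬝ᵥ v = 1 := by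
    have hnorm := real_inner_self_eq_norm_sq (hM.eigenvectorBasis i)
    rw [hM.eigenvectorBasis.orthonormal.1 i, one_pow,
      EuclideanSpace.inner_eq_star_dotProduct] at hnorm
    simpa using hnorm
  have hq := h.dotProduct_mulVec_nonneg v
  have hμ := hM.eigenvalues_eq i
  simp only [sub_mulVec, dotProduct_sub, one_mulVec, star_trivial, hv, RCLike.re_to_real] at hq hμ
  linarith

lemma exists_eigenvalues_eq_one (h : (M - 1).det = 0) : ∃ i, hM.eigenvalues i = 1 := by
  have h1 : (1 : ℝ) ∈ spectrum ℝ M := by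
    rw [spectrum.mem_iff, map_one, ← neg_sub, isUnit_iff_isUnit_det, det_neg, h]
    simp
  rwa [hM.spectrum_real_eq_range_eigenvalues] at h1

end IsHermitian

namespace PosDef

variable {A B : Matrix ι ι ℝ} (hA : A.PosDef) (hAB : (B - A).PosSemidef)
include hA hAB

open scoped MatrixOrder in
theorem exists_relative_eigenvalues (hsing : (B - A).det = 0) :
    ∃ μ : ι → ℝ, (∀ i, 1 ≤ μ i) ∧ (∃ i, μ i = 1) ∧
      ∑ i, μ i = (A⁻¹ * B).trace ∧ ∏ i, μ i = B.det / A.det := by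
  -- `μ` are the eigenvalues of `C = R⁻ᴴ B R⁻¹` for a factorization `A = Rᴴ R`, so `C - 1 ⪰ 0`.
  have hB : B.IsHermitian := sub_add_cancel B A ▸ hAB.1.add hA.1
  obtain ⟨R, rfl⟩ := CStarAlgebra.nonneg_iff_eq_star_mul_self.mp hA.posSemidef.nonneg
  rw [star_eq_conjTranspose] at *
  have hdetA : (Rᴴ * R).det = R.det ^ 2 := by
    rw [det_mul, det_conjTranspose, star_trivial, sq]
  have hR : IsUnit R.det :=
    isUnit_iff_ne_zero.mpr fun h => hA.det_pos.ne' (by rw [hdetA, h]; ring)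
  set T := R⁻¹
  set C := Tᴴ * B * T
  have hC : C.IsHermitian := isHermitian_conjTranspose_mul_mul T hB
  have hC1 : C - 1 = Tᴴ * (B - Rᴴ * R) * T := by
    have hTAT : Tᴴ * (Rᴴ * R) * T = 1 := by
      rw [← Matrix.mul_assoc, ← conjTranspose_mul, Matrix.mul_assoc, mul_nonsing_inv R hR,
        conjTranspose_one, Matrix.one_mul]
    rw [mul_sub, sub_mul, hTAT]
  refine ⟨hC.eigenvalues, hC.one_le_eigenvalues (hC1 ▸ hAB.conjTranspose_mul_mul_same T),
    hC.exists_eigenvalues_eq_one (by rw [hC1, det_mul, det_mul, hsing, mul_zero, zero_mul]),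
    ?_, ?_⟩
  · have h := hC.trace_eq_sum_eigenvalues
    simp only [RCLike.ofReal_real_eq_id, id_eq] at h
    rw [← h, trace_mul_cycle, mul_inv_rev, conjTranspose_nonsing_inv]
  · have h := hC.det_eq_prod_eigenvalues
    simp only [RCLike.ofReal_real_eq_id, id_eq] at h
    rw [← h, det_mul, det_mul, hdetA, det_conjTranspose, det_nonsing_inv, star_trivial,
      Ring.inverse_eq_inv']
    ring

theorem log_det_bounds (hsing : (B - A).det = 0) :
    Real.log ((A⁻¹ * B).trace - Fintype.card ι + 1) ≤ Real.log B.det - Real.log A.det ∧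
      Real.log B.det - Real.log A.det ≤
        (Fintype.card ι - 1) * Real.log (((A⁻¹ * B).trace - 1) / (Fintype.card ι - 1)) := by
  obtain ⟨μ, h1, ⟨i₀, hi₀⟩, hsum, hprod⟩ := hA.exists_relative_eigenvalues hAB hsing
  have hB : B.PosDef := add_sub_cancel A B ▸ hA.add_posSemidef hAB
  rw [← Real.log_div hB.det_pos.ne' hA.det_pos.ne', ← hprod, ← hsum]
  exact ⟨Real.log_sum_sub_card_add_one_le_log_prod h1,
    Real.log_prod_le_card_sub_one_mul_log_of_eq_one (fun i => one_pos.trans_le (h1 i)) hi₀⟩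

end PosDef

end Matrix

section ConstProj

variable {ι : Type*} [Fintype ι]

noncomputable def constProj (ι : Type*) [Fintype ι] : Matrix ι ι ℝ :=
  of fun _ _ => (Fintype.card ι : ℝ)⁻¹

lemma constProj_mulVec (v : ι → ℝ) :
    constProj ι *ᵥ v = fun _ => (Fintype.card ι : ℝ)⁻¹ * ∑ j, v j := by
  ext; simp [constProj, mulVec, dotProduct, mul_sum]

lemma constProj_transpose : (constProj ι)ᵀ = constProj ι := rfl

lemma mul_constProj_eq_zero {M : Matrix ι ι ℝ} (h : ∀ i, ∑ j, M i j = 0) :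
    M * constProj ι = 0 := by
  ext i j; simp [constProj, mul_apply, ← sum_mul, h i]

lemma constProj_mul_eq_zero {M : Matrix ι ι ℝ} (h : ∀ j, ∑ i, M i j = 0) :
    constProj ι * M = 0 := by
  ext i j; simp [constProj, mul_apply, ← mul_sum, h j]

variable [Nonempty ι]

lemma constProj_mulVec_const (c : ℝ) : constProj ι *ᵥ (fun _ => c) = fun _ => c := by
  simp [constProj_mulVec]

lemma constProj_mul_self : constProj ι * constProj ι = constProj ι := by
  ext i j; simp [constProj, mul_apply]

lemma trace_constProj : (constProj ι).trace = 1 := by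
  simp [constProj, trace]

lemma posSemidef_constProj : (constProj ι).PosSemidef := by
  have h := posSemidef_conjTranspose_mul_self (constProj ι)
  rwa [conjTranspose_eq_transpose_of_trivial, constProj_transpose, constProj_mul_self] at h

end ConstProj

namespace IsConnLaplacian

variable {ι : Type*} [Fintype ι] {L : Matrix ι ι ℝ} (hL : IsConnLaplacian L)
include hL

lemma isHermitian : L.IsHermitian := by
  rw [IsHermitian, conjTranspose_eq_transpose_of_trivial]; exact hL.1

lemma sum_col_eq_zero (j : ι) : ∑ i, L i j = 0 := by
  simpa [hL.1.apply] using hL.2.2.1 j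

lemma mulVec_one : L *ᵥ 1 = 0 := by
  ext i; simp [mulVec, dotProduct, hL.2.2.1 i]

lemma mul_constProj : L * constProj ι = 0 := mul_constProj_eq_zero hL.2.2.1

lemma constProj_mul : constProj ι * L = 0 := constProj_mul_eq_zero hL.sum_col_eq_zero

lemma two_mul_dotProduct_mulVec (x : ι → ℝ) :
    2 * (x ⬝ᵥ L *ᵥ x) = ∑ i, ∑ j, -L i j * (x i - x j) ^ 2 := by
  have hrow : ∑ i, ∑ j, L i j * x i ^ 2 = 0 := by
    simp [← sum_mul, hL.2.2.1]
  have hcol : ∑ i, ∑ j, L i j * x j ^ 2 = 0 := by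
    rw [sum_comm]; simp [← sum_mul, hL.sum_col_eq_zero]
  have hx : x ⬝ᵥ L *ᵥ x = ∑ i, ∑ j, L i j * x i * x j := by
    simp [dotProduct, mulVec, mul_sum, mul_comm, mul_left_comm]
  calc 2 * (x ⬝ᵥ L *ᵥ x)
      = 2 * ∑ i, ∑ j, L i j * x i * x j - ∑ i, ∑ j, L i j * x i ^ 2
          - ∑ i, ∑ j, L i j * x j ^ 2 := by rw [hx, hrow, hcol]; ring
    _ = ∑ i, ∑ j, -L i j * (x i - x j) ^ 2 := by
      simp only [mul_sum, ← sum_sub_distrib]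
      exact sum_congr rfl fun i _ => sum_congr rfl fun j _ => by ring

lemma posSemidef : L.PosSemidef := by
  refine .of_dotProduct_mulVec_nonneg hL.isHermitian fun x => ?_
  have h := hL.two_mul_dotProduct_mulVec x
  have : 0 ≤ ∑ i, ∑ j, -L i j * (x i - x j) ^ 2 := by
    refine sum_nonneg fun i _ => sum_nonneg fun j _ => ?_
    rcases eq_or_ne i j with rfl | hij
    · simp
    · exact mul_nonneg (neg_nonneg.mpr (hL.2.1 i j hij)) (sq_nonneg _)
  rw [star_trivial]; linarith

variable [Nonempty ι] [DecidableEq ι]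

lemma eq_one_sub_constProj {M : Matrix ι ι ℝ} (hM : Mᵀ = M) (hML : M * L = L)
    (hM1 : M *ᵥ 1 = 0) : M = 1 - constProj ι := by
  set D := 1 - constProj ι - M with hD
  have hDt : Dᵀ = D := by simp [hD, constProj_transpose, hM]
  have hLD : L * D = 0 := by
    rw [hD, mul_sub, mul_sub, hL.mul_constProj, ← hL.1, ← hM, ← transpose_mul, hML]; simp
  have hD1 : D *ᵥ 1 = 0 := by
    rw [hD, sub_mulVec, sub_mulVec, hM1, one_mulVec, Pi.one_def, constProj_mulVec_const]; simp
  suffices D = 0 by rwa [hD, sub_sub, sub_eq_zero, eq_comm, ← eq_sub_iff_add_eq'] at this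
  refine ext_iff_mulVec.mpr fun v => ?_
  obtain ⟨c, hc⟩ := (hL.2.2.2 (D *ᵥ v)).mp (by rw [mulVec_mulVec, hLD, zero_mulVec])
  have hsum : 1 ⬝ᵥ D *ᵥ v = 0 := by
    rw [dotProduct_mulVec, ← mulVec_transpose, hDt, hD1, zero_dotProduct]
  rw [hc] at hsum
  simp only [dotProduct, Pi.one_apply, one_mul, sum_const, card_univ, nsmul_eq_mul,
    mul_eq_zero, Nat.cast_eq_zero, Fintype.card_ne_zero, false_or] at hsum
  rw [hc, hsum, zero_mulVec]
  rfl

lemma add_constProj_mulVec_eigenvectorBasis (i : ι) :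
    (L + constProj ι) *ᵥ ⇑(hL.isHermitian.eigenvectorBasis i) =
      (if 0 < hL.isHermitian.eigenvalues i then hL.isHermitian.eigenvalues i else 1) •
        ⇑(hL.isHermitian.eigenvectorBasis i) := by
  set b := ⇑(hL.isHermitian.eigenvectorBasis i)
  set μ := hL.isHermitian.eigenvalues i
  have hLb : L *ᵥ b = μ • b := hL.isHermitian.mulVec_eigenvectorBasis i
  rw [add_mulVec, hLb]
  split_ifs with hμ
  · have hsum : μ * ∑ j, b j = 0 := by
      have h : 1 ⬝ᵥ L *ᵥ b = 0 := by
        rw [dotProduct_mulVec, ← mulVec_transpose, hL.1, hL.mulVec_one, zero_dotProduct]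
      simpa [hLb, dotProduct, mul_sum] using h
    simp [constProj_mulVec, (mul_eq_zero.mp hsum).resolve_left hμ.ne', Pi.zero_def]
  · have hμ0 : μ = 0 := le_antisymm (not_lt.mp hμ) (hL.posSemidef.eigenvalues_nonneg i)
    obtain ⟨c, hc⟩ := (hL.2.2.2 b).mp (by rw [hLb, hμ0, zero_smul])
    rw [hμ0, zero_smul, zero_add, one_smul, hc, constProj_mulVec_const]

lemma det_add_constProj : (L + constProj ι).det = Real.exp (pld L) := by
  rw [det_eq_prod_of_mulVec_eq_smul
    (hL.isHermitian.eigenvectorBasis.toBasis.map (WithLp.linearEquiv 2 ℝ (ι → ℝ))) _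
    hL.add_constProj_mulVec_eigenvectorBasis, hL.isHermitian.pld_eq,
    Real.exp_sum, prod_filter]
  exact prod_congr rfl fun i _ => by split_ifs with h <;> simp [Real.exp_log, h]

lemma posDef_add_constProj : (L + constProj ι).PosDef :=
  (hL.posSemidef.add posSemidef_constProj).posDef_iff_det_ne_zero.mpr
    (hL.det_add_constProj ▸ (Real.exp_pos _).ne')

lemma log_det_add_constProj : Real.log (L + constProj ι).det = pld L := by
  rw [hL.det_add_constProj, Real.log_exp]

end IsConnLaplacian

namespace IsMoorePenrose

variable {ι : Type*} [Fintype ι] [Nonempty ι] [DecidableEq ι] {L P : Matrix ι ι ℝ}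
  (hP : IsMoorePenrose L P) (hL : IsConnLaplacian L)
include hP hL

lemma mul_eq_one_sub_constProj : L * P = 1 - constProj ι := by
  obtain ⟨hLPL, -, hLP, -⟩ := hP
  refine hL.eq_one_sub_constProj hLP hLPL ?_
  rw [← hLP, transpose_mul, hL.1, ← mulVec_mulVec, hL.mulVec_one, mulVec_zero]

lemma pinv_mul_eq_one_sub_constProj : P * L = 1 - constProj ι := by
  obtain ⟨hLPL, -, -, hPL⟩ := hP
  have hPLL := congrArg transpose hLPL
  rw [Matrix.mul_assoc, transpose_mul, hPL, hL.1] at hPLL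
  refine hL.eq_one_sub_constProj hPL hPLL ?_
  rw [← mulVec_mulVec, hL.mulVec_one, mulVec_zero]

lemma constProj_mul_pinv : constProj ι * P = 0 := by
  have h := hP.2.1
  rwa [hP.pinv_mul_eq_one_sub_constProj hL, sub_mul, Matrix.one_mul, sub_eq_self] at h

lemma inv_add_constProj : (L + constProj ι)⁻¹ = P + constProj ι := by
  refine inv_eq_right_inv ?_
  rw [add_mul, mul_add, mul_add, hP.mul_eq_one_sub_constProj hL, hL.mul_constProj,
    hP.constProj_mul_pinv hL, constProj_mul_self]
  abel

lemma trace_inv_add_constProj_mul {G : Matrix ι ι ℝ} (hG : IsConnLaplacian G) :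
    ((L + constProj ι)⁻¹ * (G + constProj ι)).trace = (P * G).trace + 1 := by
  rw [hP.inv_add_constProj hL, add_mul, mul_add, mul_add, hG.constProj_mul, constProj_mul_self,
    trace_add, trace_add, trace_add, trace_mul_comm P (constProj ι), hP.constProj_mul_pinv hL,
    trace_constProj]
  simp

lemma trace_pinv_mul : (P * L).trace = Fintype.card ι - 1 := by
  rw [hP.pinv_mul_eq_one_sub_constProj hL, trace_sub, trace_one, trace_constProj]

end IsMoorePenrose

/-- stretch bounds on the pseudo-log-determinant. If `L_H ⪯ L_G` and
`σ = st_H(G) = Tr(L_H⁺ L_G)`, then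
`ld(L_H) + log(σ - n + 2) ≤ ld(L_G) ≤ ld(L_H) + (n-1) log(σ/(n-1))`,
with equalities when `H = G`. -/
theorem stretch_pld_bounds
    {n : ℕ} (hn : 2 ≤ n) (LG LH PH : Matrix (Fin n) (Fin n) ℝ)
    (hG : IsConnLaplacian LG) (hH : IsConnLaplacian LH)
    (hPH : IsMoorePenrose LH PH)
    (hle : (LG - LH).PosSemidef) :
    (pld LH + Real.log ((PH * LG).trace - n + 2) ≤ pld LG ∧
      pld LG ≤ pld LH + ((n : ℝ) - 1) * Real.log ((PH * LG).trace / ((n : ℝ) - 1))) ∧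
    (LH = LG →
      (pld LH + Real.log ((PH * LG).trace - n + 2) = pld LG ∧
        pld LG = pld LH + ((n : ℝ) - 1) * Real.log ((PH * LG).trace / ((n : ℝ) - 1)))) := by
  have : Nonempty (Fin n) := ⟨⟨0, by omega⟩⟩
  have hdiff : LG + constProj (Fin n) - (LH + constProj (Fin n)) = LG - LH :=
    add_sub_add_right_eq_sub _ _ _
  have hsing : (LG - LH).det = 0 := det_eq_zero_of_sum_row_eq_zero fun i => by
    simp [Matrix.sub_apply, sum_sub_distrib, hG.2.2.1 i, hH.2.2.1 i]
  obtain ⟨hlower, hupper⟩ :=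
    hH.posDef_add_constProj.log_det_bounds (hdiff ▸ hle) (hdiff ▸ hsing)
  rw [hPH.trace_inv_add_constProj_mul hH hG, hG.log_det_add_constProj,
    hH.log_det_add_constProj, Fintype.card_fin] at hlower hupper
  rw [add_sub_cancel_right] at hupper
  rw [show (PH * LG).trace + 1 - n + 1 = (PH * LG).trace - n + 2 by ring] at hlower
  refine ⟨⟨by linarith, by linarith⟩, fun hHG => ?_⟩
  subst hHG
  have hσ : (PH * LH).trace = n - 1 := by rw [hPH.trace_pinv_mul hH, Fintype.card_fin]
  have hn1 : (n : ℝ) - 1 ≠ 0 := by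
    have : (2 : ℝ) ≤ n := by exact_mod_cast hn
    linarith
  rw [hσ, div_self hn1, show (n : ℝ) - 1 - n + 2 = 1 by ring]
  simp
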